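/- Let A ∈ (1,2], a ∈ [0,1], and define φ(r) = r⁴ − (2(A+1)(1−a)/(A+3))·r³ + (2(A(1−2a)−2a−3)/(A+3))·r² − (2(A(1−a)+3a+1)/(A+3))·r + (A−1)/(A+3). Then φ(0) > 0 and φ(1) < 0, so φ has a least root R_{Co(A)} in (0,1); and for every analytic function f on the open unit disc 𝔻 with f(0)=0, f'(0)=1, f''(0)/2 = a and Re f'(z) > 0 on 𝔻, one has Re T_f(z) > 0 for all |z| < R_{Co(A)}, where T_f(z) = (2/(A−1))·[((A+1)/2)·(1+z)/(1−z) − 1 − z f''(z)/f'(z)]. -/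

import Mathlib

/-!
Write `p = f'`. As `Re p > 0`, the Cayley transform `w = (p - 1) / (p + 1)` maps the disc into
itself with `w 0 = 0`, so `ψ = w / z` maps the disc into the closed disc, with
`ψ 0 = p'(0) / 2 = a`. From `z p' / p = 2 z w' / (1 - w²)`, `w' = ψ + z ψ'` and the Schwarz–Pick
bounds `|ψ z| ≤ (a + r) / (1 + a r)`, `|ψ' z| ≤ (1 - |ψ z|²) / (1 - r²)` one gets, for `|z| = r`,
`|z f'' / f'| ≤ 2 r (a + 2 r + a r²) / ((1 - r²) (1 + 2 a r + r²))`. Together with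
`Re ((1 + z) / (1 - z)) ≥ (1 - r) / (1 + r)` this gives `Re T_f(z) > 0` as soon as that bound
plus `1` is below `(A + 1) (1 - r) / (2 (1 + r))`, and after clearing denominators this inequality
is exactly `φ(r) > 0`, which holds on `[0, R)`.
-/

open Complex Metric Set

/-- The concavity test function `T_f` associated with `Co(A)`. -/
noncomputable def Tfun (A : ℝ) (f : ℂ → ℂ) (z : ℂ) : ℂ :=
  (2 / ((A : ℂ) - 1)) * ((((A : ℂ) + 1) / 2) * (1 + z) / (1 - z) - 1 -
    z * deriv (deriv f) z / deriv f z)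

open ComplexConjugate

noncomputable def blaschke (c u : ℂ) : ℂ := (u - c) / (1 - conj c * u)

lemma norm_one_sub_conj_mul_sq_sub_norm_sub_sq (c u : ℂ) :
    ‖1 - conj c * u‖ ^ 2 - ‖u - c‖ ^ 2 = (1 - ‖c‖ ^ 2) * (1 - ‖u‖ ^ 2) := by
  simp only [Complex.sq_norm, normSq_apply, sub_re, sub_im, mul_re, mul_im, conj_re, conj_im,
    one_re, one_im]
  ring

lemma one_sub_conj_mul_ne_zero {c u : ℂ} (hc : ‖c‖ < 1) (hu : ‖u‖ ≤ 1) :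
    1 - conj c * u ≠ 0 := by
  refine sub_ne_zero.mpr fun h => ?_
  have : ‖conj c * u‖ < 1 := by
    rw [norm_mul, RCLike.norm_conj]
    exact mul_lt_one_of_nonneg_of_lt_one_left (norm_nonneg c) hc hu
  simp [← h] at this

lemma norm_blaschke_lt_one {c u : ℂ} (hc : ‖c‖ < 1) (hu : ‖u‖ < 1) : ‖blaschke c u‖ < 1 := by
  have hD := norm_pos_iff.mpr (one_sub_conj_mul_ne_zero hc hu.le)
  rw [blaschke, norm_div, div_lt_one hD, ← sq_lt_sq₀ (norm_nonneg _) hD.le, ← sub_pos,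
    norm_one_sub_conj_mul_sq_sub_norm_sub_sq]
  have := norm_nonneg c
  have := norm_nonneg u
  apply mul_pos <;> nlinarith

lemma blaschke_mapsTo_ball {c : ℂ} (hc : ‖c‖ < 1) :
    MapsTo (blaschke c) (ball 0 1) (ball 0 1) := fun u hu => by
  rw [mem_ball_zero_iff] at hu ⊢
  exact norm_blaschke_lt_one hc hu

@[simp] lemma blaschke_self (c : ℂ) : blaschke c c = 0 := by simp [blaschke]

@[simp] lemma blaschke_neg_zero (c : ℂ) : blaschke (-c) 0 = c := by simp [blaschke]

lemma blaschke_neg_blaschke {c u : ℂ} (hc : ‖c‖ < 1) (hu : ‖u‖ ≤ 1) :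
    blaschke (-c) (blaschke c u) = u := by
  have hD := one_sub_conj_mul_ne_zero hc hu
  have hcc : 1 - conj c * c ≠ 0 := one_sub_conj_mul_ne_zero hc hc.le
  have hv : blaschke c u * (1 - conj c * u) = u - c := div_mul_cancel₀ _ hD
  have hnum : blaschke c u - -c = u * (1 - conj c * c) / (1 - conj c * u) := by
    rw [eq_div_iff hD]; linear_combination hv
  have hden : 1 - conj (-c) * blaschke c u = (1 - conj c * c) / (1 - conj c * u) := by
    rw [eq_div_iff hD, map_neg]; linear_combination conj c * hv
  rw [blaschke, hnum, hden, div_div_div_cancel_right₀ hD, mul_div_cancel_right₀ _ hcc]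

lemma hasDerivAt_blaschke {c u : ℂ} (hu : 1 - conj c * u ≠ 0) :
    HasDerivAt (blaschke c) ((1 - conj c * c) / (1 - conj c * u) ^ 2) u := by
  have : HasDerivAt (blaschke c) _ u :=
    ((hasDerivAt_id u).sub_const c).div (((hasDerivAt_id u).const_mul (conj c)).const_sub 1) hu
  refine this.congr_deriv ?_
  simp only [id]
  ring

lemma differentiableOn_blaschke {c : ℂ} (hc : ‖c‖ < 1) :
    DifferentiableOn ℂ (blaschke c) (ball 0 1) := fun _ hu =>
  (hasDerivAt_blaschke (one_sub_conj_mul_ne_zero hc (mem_ball_zero_iff.mp hu).le))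
    |>.differentiableAt.differentiableWithinAt

lemma norm_one_sub_conj_mul_self {z : ℂ} (hz : ‖z‖ ≤ 1) : ‖1 - conj z * z‖ = 1 - ‖z‖ ^ 2 := by
  rw [Complex.conj_mul', ← ofReal_pow, ← ofReal_one, ← ofReal_sub, norm_real, Real.norm_eq_abs,
    abs_of_nonneg (by nlinarith [norm_nonneg z])]

lemma norm_blaschke_neg_le {c v : ℂ} {ρ : ℝ} (hc : ‖c‖ ≤ 1) (hv : ‖v‖ ≤ ρ) (hρ : ρ ≤ 1) :
    ‖blaschke (-c) v‖ ≤ (‖c‖ + ρ) / (1 + ‖c‖ * ρ) := by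
  have hρ0 : 0 ≤ ρ := (norm_nonneg v).trans hv
  have hs0 := norm_nonneg c
  have hid := norm_one_sub_conj_mul_sq_sub_norm_sub_sq (-c) v
  have hD : ‖1 - conj (-c) * v‖ ≤ 1 + ‖c‖ * ρ := by
    refine (norm_sub_le _ _).trans ?_
    rw [norm_one, norm_mul, RCLike.norm_conj, norm_neg]
    gcongr
  rw [norm_neg] at hid
  rw [blaschke, norm_div]
  rcases (norm_nonneg (1 - conj (-c) * v)).eq_or_lt with h0 | hpos
  · rw [← h0, div_zero]
    positivity
  rw [div_le_div_iff₀ hpos (by positivity), ← pow_le_pow_iff_left₀ (by positivity)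
    (by positivity) two_ne_zero]
  have hv2 : ‖v‖ ^ 2 ≤ ρ ^ 2 := pow_le_pow_left₀ (norm_nonneg v) hv 2
  have hs2 : ‖c‖ ^ 2 ≤ 1 := pow_le_one₀ hs0 hc
  have hD2 : ‖1 - conj (-c) * v‖ ^ 2 ≤ (1 + ‖c‖ * ρ) ^ 2 := pow_le_pow_left₀ hpos.le hD 2
  have hcoef : 0 ≤ (1 - ‖c‖ ^ 2) * (1 - ρ ^ 2) :=
    mul_nonneg (by linarith) (by nlinarith)
  nlinarith [mul_le_mul_of_nonneg_left hD2 hcoef,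
    mul_le_mul_of_nonneg_left hv2 (sub_nonneg.mpr hs2)]

lemma mapsTo_ball_or_eqOn_const {ψ : ℂ → ℂ} (hd : DifferentiableOn ℂ ψ (ball 0 1))
    (hψ : MapsTo ψ (ball 0 1) (closedBall 0 1)) :
    MapsTo ψ (ball 0 1) (ball 0 1) ∨
      ∃ ζ ∈ ball (0 : ℂ) 1, ‖ψ ζ‖ = 1 ∧ EqOn ψ (Function.const ℂ (ψ ζ)) (ball 0 1) := by
  by_cases h : ∃ ζ ∈ ball (0 : ℂ) 1, ‖ψ ζ‖ = 1
  · obtain ⟨ζ, hζ, h1⟩ := h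
    refine Or.inr ⟨ζ, hζ, h1, eqOn_of_isPreconnected_of_isMaxOn_norm
      (convex_ball 0 1).isPreconnected isOpen_ball hd hζ fun u hu => ?_⟩
    simpa [h1] using hψ hu
  · push Not at h
    exact Or.inl fun u hu =>
      mem_ball_zero_iff.mpr ((mem_closedBall_zero_iff.mp (hψ hu)).lt_of_ne (h u hu))

theorem schwarzPick_norm_le {ψ : ℂ → ℂ} (hd : DifferentiableOn ℂ ψ (ball 0 1))
    (hψ : MapsTo ψ (ball 0 1) (closedBall 0 1)) {z : ℂ} (hz : z ∈ ball 0 1) :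
    ‖ψ z‖ ≤ (‖ψ 0‖ + ‖z‖) / (1 + ‖ψ 0‖ * ‖z‖) := by
  have hz1 := mem_ball_zero_iff.mp hz
  have h0 : (0 : ℂ) ∈ ball 0 1 := mem_ball_self one_pos
  rcases mapsTo_ball_or_eqOn_const hd hψ with hball | ⟨ζ, -, h1, hconst⟩
  · set c := ψ 0
    have hc : ‖c‖ < 1 := mem_ball_zero_iff.mp (hball h0)
    have hschwarz : ‖blaschke c (ψ z)‖ ≤ ‖z‖ :=
      norm_le_norm_of_mapsTo_ball ((differentiableOn_blaschke hc).comp hd hball)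
        (((blaschke_mapsTo_ball hc).comp hball).mono_right ball_subset_closedBall)
        (blaschke_self c) hz1
    rw [← blaschke_neg_blaschke hc (mem_closedBall_zero_iff.mp (hψ hz))]
    exact norm_blaschke_neg_le hc.le hschwarz hz1.le
  · rw [hconst hz, hconst h0, Function.const_apply, Function.const_apply, h1, one_mul,
      div_self (by positivity)]

theorem schwarzPick_norm_deriv_le {ψ : ℂ → ℂ} (hd : DifferentiableOn ℂ ψ (ball 0 1))
    (hψ : MapsTo ψ (ball 0 1) (closedBall 0 1)) {z : ℂ} (hz : z ∈ ball 0 1) :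
    ‖deriv ψ z‖ ≤ (1 - ‖ψ z‖ ^ 2) / (1 - ‖z‖ ^ 2) := by
  have hz1 := mem_ball_zero_iff.mp hz
  have hz2 : 0 < 1 - ‖z‖ ^ 2 := by nlinarith [norm_nonneg z]
  rcases mapsTo_ball_or_eqOn_const hd hψ with hball | ⟨ζ, -, h1, hconst⟩
  · set c := ψ z
    have hc : ‖c‖ < 1 := mem_ball_zero_iff.mp (hball hz)
    have hz' : ‖-z‖ < 1 := by rwa [norm_neg]
    set g := blaschke c ∘ ψ ∘ blaschke (-z)
    have hg : HasDerivAt g ((1 - conj c * c)⁻¹ * (deriv ψ z * (1 - conj z * z))) 0 := by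
      have hin : HasDerivAt (blaschke (-z)) (1 - conj z * z) 0 := by
        simpa using hasDerivAt_blaschke (c := -z) (u := 0) (by simp)
      have hmid : HasDerivAt ψ (deriv ψ z) (blaschke (-z) 0) := by
        rw [blaschke_neg_zero]
        exact (hd.differentiableAt (isOpen_ball.mem_nhds hz)).hasDerivAt
      have hout : HasDerivAt (blaschke c) (1 - conj c * c)⁻¹ (ψ (blaschke (-z) 0)) := by
        have hcc := one_sub_conj_mul_ne_zero hc hc.le
        rw [blaschke_neg_zero]
        refine (hasDerivAt_blaschke hcc).congr_deriv ?_
        field_simp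
      exact hout.comp 0 (hmid.comp 0 hin)
    have hgmaps : MapsTo g (ball 0 1) (ball 0 1) :=
      (blaschke_mapsTo_ball hc).comp (hball.comp (blaschke_mapsTo_ball hz'))
    have hschwarz : ‖deriv g 0‖ ≤ 1 := by
      refine norm_deriv_le_one_of_mapsTo_ball ((differentiableOn_blaschke hc).comp
        (hd.comp (differentiableOn_blaschke hz') (blaschke_mapsTo_ball hz')) (hball.comp
          (blaschke_mapsTo_ball hz'))) ?_ one_pos
      simpa [g, c] using hgmaps.mono_right ball_subset_closedBall
    rw [hg.deriv, norm_mul, norm_mul, norm_inv, norm_one_sub_conj_mul_self hc.le,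
      norm_one_sub_conj_mul_self hz1.le] at hschwarz
    have hc2 : 0 < 1 - ‖c‖ ^ 2 := by nlinarith [norm_nonneg c]
    rw [le_div_iff₀ hz2]
    rw [inv_mul_le_iff₀ hc2, mul_one] at hschwarz
    exact hschwarz
  · have hderiv : deriv ψ z = 0 := by
      rw [(Filter.eventuallyEq_of_mem (isOpen_ball.mem_nhds hz) hconst).deriv_eq]
      exact deriv_const z _
    rw [hderiv, hconst hz, Function.const_apply, h1]
    simp

lemma norm_sub_one_div_add_one_lt_one {u : ℂ} (hu : 0 < u.re) : ‖(u - 1) / (u + 1)‖ < 1 := by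
  have hpos : 0 < ‖u + 1‖ := norm_pos_iff.mpr fun h => by
    have := congrArg re h
    simp only [add_re, one_re, zero_re] at this
    linarith
  rw [norm_div, div_lt_one hpos, ← sq_lt_sq₀ (norm_nonneg _) hpos.le, Complex.sq_norm,
    Complex.sq_norm, normSq_apply, normSq_apply]
  simp only [sub_re, sub_im, add_re, add_im, one_re, one_im]
  nlinarith

lemma hasDerivAt_cayley {p : ℂ → ℂ} {p' z : ℂ} (hp : HasDerivAt p p' z) (h : p z + 1 ≠ 0) :
    HasDerivAt (fun ζ => (p ζ - 1) / (p ζ + 1)) (2 * p' / (p z + 1) ^ 2) z := by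
  refine ((hp.sub_const 1).div (hp.add_const 1) h).congr_deriv ?_
  ring

lemma norm_two_mul_add_mul_div_le {z s s' : ℂ} (h : ‖z‖ * ‖s‖ < 1) :
    ‖2 * z * (s + z * s') / (1 - z ^ 2 * s ^ 2)‖ ≤
      2 * ‖z‖ * (‖s‖ + ‖z‖ * ‖s'‖) / (1 - ‖z‖ ^ 2 * ‖s‖ ^ 2) := by
  have hpos : 0 < 1 - ‖z‖ ^ 2 * ‖s‖ ^ 2 := by
    nlinarith [mul_nonneg (norm_nonneg z) (norm_nonneg s)]
  have hnum : ‖2 * z * (s + z * s')‖ ≤ 2 * ‖z‖ * (‖s‖ + ‖z‖ * ‖s'‖) := by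
    rw [norm_mul, norm_mul, Complex.norm_two]
    gcongr
    exact (norm_add_le _ _).trans_eq (by rw [norm_mul])
  have hden : 1 - ‖z‖ ^ 2 * ‖s‖ ^ 2 ≤ ‖1 - z ^ 2 * s ^ 2‖ := by
    have := norm_sub_norm_le (1 : ℂ) (z ^ 2 * s ^ 2)
    rwa [norm_one, norm_mul, norm_pow, norm_pow] at this
  rw [norm_div]
  exact div_le_div₀ (by positivity) hnum hpos hden

noncomputable def logDerivBound (a r : ℝ) : ℝ :=
  2 * r * (a + 2 * r + a * r ^ 2) / ((1 - r ^ 2) * (1 + 2 * a * r + r ^ 2))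

lemma le_logDerivBound {a r t d : ℝ} (ha : 0 ≤ a) (hr0 : 0 ≤ r) (hr1 : r < 1) (ht0 : 0 ≤ t)
    (ht1 : t ≤ 1) (hta : t ≤ (a + r) / (1 + a * r)) (hd : d ≤ (1 - t ^ 2) / (1 - r ^ 2)) :
    2 * r * (t + r * d) / (1 - r ^ 2 * t ^ 2) ≤ logDerivBound a r := by
  have hr2 : 0 < 1 - r ^ 2 := by nlinarith
  have hrt : 0 < 1 - r ^ 2 * t ^ 2 := by nlinarith [mul_le_mul ht1 ht1 ht0 zero_le_one]
  have hta' : t * (1 + a * r) ≤ a + r := (le_div_iff₀ (by positivity)).mp hta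
  calc 2 * r * (t + r * d) / (1 - r ^ 2 * t ^ 2)
      ≤ 2 * r * (t + r * ((1 - t ^ 2) / (1 - r ^ 2))) / (1 - r ^ 2 * t ^ 2) := by gcongr
    _ = 2 * r * (t + r) / ((1 - r ^ 2) * (1 + r * t)) := by
        have : 1 - r * t ≠ 0 := by nlinarith
        field_simp
        ring
    _ ≤ logDerivBound a r := by
        rw [logDerivBound, div_le_div_iff₀ (by positivity) (by positivity)]
        nlinarith [mul_nonneg (mul_nonneg (mul_nonneg (by norm_num : (0:ℝ) ≤ 2) hr0) hr2.le)
          (mul_nonneg hr2.le (sub_nonneg.mpr hta'))]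

lemma mul_div_eq_cayley {P P' z : ℂ} (hP : P ≠ 0) (hP1 : P + 1 ≠ 0) :
    z * P' / P = 2 * z * (2 * P' / (P + 1) ^ 2) / (1 - ((P - 1) / (P + 1)) ^ 2) := by
  have hden : 1 - ((P - 1) / (P + 1)) ^ 2 = 4 * P / (P + 1) ^ 2 := by
    field_simp
    ring
  rw [hden]
  field_simp
  ring

theorem exists_logDeriv_representation_of_re_pos {p : ℂ → ℂ}
    (hp : DifferentiableOn ℂ p (ball 0 1)) (hre : ∀ ζ ∈ ball (0 : ℂ) 1, 0 < (p ζ).re)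
    (hp0 : p 0 = 1) :
    ∃ ψ : ℂ → ℂ, DifferentiableOn ℂ ψ (ball 0 1) ∧ MapsTo ψ (ball 0 1) (closedBall 0 1) ∧
      ψ 0 = deriv p 0 / 2 ∧ ∀ z ∈ ball (0 : ℂ) 1,
        z * deriv p z / p z = 2 * z * (ψ z + z * deriv ψ z) / (1 - z ^ 2 * ψ z ^ 2) := by
  have h0 : (0 : ℂ) ∈ ball 0 1 := mem_ball_self one_pos
  have hp1_ne : ∀ ζ ∈ ball (0 : ℂ) 1, p ζ + 1 ≠ 0 := fun ζ hζ h => by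
    have := congrArg re h
    simp only [add_re, one_re, zero_re] at this
    linarith [hre ζ hζ]
  set w := fun ζ => (p ζ - 1) / (p ζ + 1)
  have hw' : ∀ ζ ∈ ball (0 : ℂ) 1, HasDerivAt w (2 * deriv p ζ / (p ζ + 1) ^ 2) ζ :=
    fun ζ hζ => hasDerivAt_cayley
      (hp.differentiableAt (isOpen_ball.mem_nhds hζ)).hasDerivAt (hp1_ne ζ hζ)
  have hwd : DifferentiableOn ℂ w (ball 0 1) :=
    fun ζ hζ => (hw' ζ hζ).differentiableAt.differentiableWithinAt
  have hw0 : w 0 = 0 := by simp [w, hp0]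
  have hwmaps : MapsTo w (ball 0 1) (closedBall (w 0) 1) := fun ζ hζ => by
    rw [hw0, mem_closedBall_zero_iff]
    exact (norm_sub_one_div_add_one_lt_one (hre ζ hζ)).le
  set ψ := dslope w 0
  have hψd : DifferentiableOn ℂ ψ (ball 0 1) :=
    (differentiableOn_dslope (isOpen_ball.mem_nhds h0)).mpr hwd
  have hwψ : w = fun ζ => ζ * ψ ζ := funext fun ζ => by
    simpa [hw0] using (sub_smul_dslope w 0 ζ).symm
  refine ⟨ψ, hψd, fun ζ hζ => ?_, ?_, fun z hz => ?_⟩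
  · simpa using norm_dslope_le_div_of_mapsTo_ball hwd hwmaps hζ
  · rw [show ψ 0 = deriv w 0 from dslope_same w 0, (hw' 0 h0).deriv, hp0]
    ring
  · have hψ' := (hψd.differentiableAt (isOpen_ball.mem_nhds hz)).hasDerivAt
    have hw'z : deriv w z = ψ z + z * deriv ψ z := by
      rw [hwψ, ((hasDerivAt_id' z).fun_mul hψ').deriv, one_mul]
    have hwz : z ^ 2 * ψ z ^ 2 = w z ^ 2 := by rw [hwψ, mul_pow]
    rw [← hw'z, (hw' z hz).deriv, hwz]
    exact mul_div_eq_cayley (fun h => by simpa [h] using hre z hz) (hp1_ne z hz)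

theorem norm_mul_deriv_div_le_logDerivBound {p : ℂ → ℂ} {a : ℝ}
    (hp : DifferentiableOn ℂ p (ball 0 1)) (hre : ∀ ζ ∈ ball (0 : ℂ) 1, 0 < (p ζ).re)
    (hp0 : p 0 = 1) (hp0' : deriv p 0 = 2 * a) (ha : 0 ≤ a) {z : ℂ} (hz : z ∈ ball 0 1) :
    ‖z * deriv p z / p z‖ ≤ logDerivBound a ‖z‖ := by
  obtain ⟨ψ, hψd, hψmaps, hψ0, hlog⟩ := exists_logDeriv_representation_of_re_pos hp hre hp0
  have hz1 := mem_ball_zero_iff.mp hz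
  have ht1 : ‖ψ z‖ ≤ 1 := mem_closedBall_zero_iff.mp (hψmaps hz)
  have hta : ‖ψ z‖ ≤ (a + ‖z‖) / (1 + a * ‖z‖) := by
    have hψa : ψ 0 = a := by rw [hψ0, hp0']; ring
    simpa [hψa, abs_of_nonneg ha] using schwarzPick_norm_le hψd hψmaps hz
  rw [hlog z hz]
  refine (norm_two_mul_add_mul_div_le ?_).trans (le_logDerivBound ha (norm_nonneg z) hz1
    (norm_nonneg _) ht1 hta (schwarzPick_norm_deriv_le hψd hψmaps hz))
  nlinarith [norm_nonneg z, norm_nonneg (ψ z)]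

lemma one_sub_norm_div_one_add_norm_le_re {z : ℂ} (hz : ‖z‖ < 1) :
    (1 - ‖z‖) / (1 + ‖z‖) ≤ ((1 + z) / (1 - z)).re := by
  have hpos : 0 < ‖1 - z‖ := norm_pos_iff.mpr (sub_ne_zero.mpr fun h => by simp [← h] at hz)
  have hre : ((1 + z) / (1 - z)).re = (1 - ‖z‖ ^ 2) / ‖1 - z‖ ^ 2 := by
    rw [div_re, ← add_div, Complex.sq_norm, Complex.sq_norm]
    simp only [normSq_apply, add_re, add_im, sub_re, sub_im, one_re, one_im]
    ring
  have hle : ‖1 - z‖ ≤ 1 + ‖z‖ := (norm_sub_le _ _).trans_eq (by rw [norm_one])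
  have hr2 : 0 ≤ 1 - ‖z‖ ^ 2 := by nlinarith [norm_nonneg z]
  calc (1 - ‖z‖) / (1 + ‖z‖) = (1 - ‖z‖ ^ 2) / (1 + ‖z‖) ^ 2 := by
        field_simp
        ring
    _ ≤ (1 - ‖z‖ ^ 2) / ‖1 - z‖ ^ 2 := by gcongr
    _ = ((1 + z) / (1 - z)).re := hre.symm

lemma re_Tfun_pos {A : ℝ} {f : ℂ → ℂ} {z : ℂ} (hA : 1 < A) (hz : ‖z‖ < 1)
    (h : 1 + ‖z * deriv (deriv f) z / deriv f z‖ < (A + 1) / 2 * ((1 - ‖z‖) / (1 + ‖z‖))) :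
    0 < (Tfun A f z).re := by
  have hT : Tfun A f z = ((2 / (A - 1) : ℝ) : ℂ) *
      (((A + 1) / 2 : ℝ) * ((1 + z) / (1 - z)) - 1 - z * deriv (deriv f) z / deriv f z) := by
    rw [Tfun]
    push_cast
    ring
  rw [hT, re_ofReal_mul, sub_re, sub_re, re_ofReal_mul, one_re]
  have hX := re_le_norm (z * deriv (deriv f) z / deriv f z)
  have hH := mul_le_mul_of_nonneg_left (one_sub_norm_div_one_add_norm_le_re hz)
    (by linarith : (0 : ℝ) ≤ (A + 1) / 2)
  exact mul_pos (div_pos two_pos (by linarith)) (by linarith)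

theorem exists_isLeast_zero_of_pos_of_neg {φ : ℝ → ℝ} {a b : ℝ} (hab : a ≤ b)
    (hφ : ContinuousOn φ (Icc a b)) (ha : 0 < φ a) (hb : φ b < 0) :
    ∃ R, IsLeast {r | r ∈ Ioo a b ∧ φ r = 0} R ∧ ∀ r ∈ Ico a R, 0 < φ r := by
  have hclosed : IsClosed (Icc a b ∩ φ ⁻¹' {0}) :=
    hφ.preimage_isClosed_of_isClosed isClosed_Icc isClosed_singleton
  obtain ⟨r₀, hr₀, hφr₀⟩ := intermediate_value_Icc' hab hφ ⟨hb.le, ha.le⟩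
  obtain ⟨R, ⟨hRab, hφR⟩, hleast⟩ :=
    (isCompact_Icc.of_isClosed_subset hclosed inter_subset_left).exists_isLeast ⟨r₀, hr₀, hφr₀⟩
  have hφR : φ R = 0 := hφR
  have hpos : ∀ r ∈ Ico a R, 0 < φ r := by
    rintro r ⟨har, hrR⟩
    by_contra! hr
    have hrb : r ≤ b := hrR.le.trans hRab.2
    obtain ⟨s, hs, hφs⟩ := intermediate_value_Icc' har
      (hφ.mono (Icc_subset_Icc le_rfl hrb)) ⟨hr, ha.le⟩
    linarith [hleast ⟨⟨hs.1, hs.2.trans hrb⟩, hφs⟩, hs.2]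
  refine ⟨R, ⟨⟨⟨hRab.1.lt_of_ne ?_, hRab.2.lt_of_ne ?_⟩, hφR⟩,
    fun r hr => hleast ⟨Ioo_subset_Icc_self hr.1, hr.2⟩⟩, hpos⟩
  · rintro rfl
    linarith
  · rintro rfl
    linarith

noncomputable def concavityRadiusPoly (A a r : ℝ) : ℝ :=
  r ^ 4 - (2 * (A + 1) * (1 - a) / (A + 3)) * r ^ 3 +
    (2 * (A * (1 - 2 * a) - 2 * a - 3) / (A + 3)) * r ^ 2 -
    (2 * (A * (1 - a) + 3 * a + 1) / (A + 3)) * r + (A - 1) / (A + 3)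

lemma continuous_concavityRadiusPoly (A a : ℝ) : Continuous (concavityRadiusPoly A a) := by
  unfold concavityRadiusPoly
  fun_prop

lemma concavityRadiusPoly_zero_pos {A : ℝ} (a : ℝ) (hA : 1 < A) :
    0 < concavityRadiusPoly A a 0 := by
  have : concavityRadiusPoly A a 0 = (A - 1) / (A + 3) := by simp [concavityRadiusPoly]
  rw [this]
  exact div_pos (by linarith) (by linarith)

lemma concavityRadiusPoly_one_neg {A a : ℝ} (hA : -3 < A) (ha : -1 < a) :
    concavityRadiusPoly A a 1 < 0 := by
  have hA3 : A + 3 ≠ 0 := by linarith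
  have : concavityRadiusPoly A a 1 = -8 * (a + 1) / (A + 3) := by
    rw [concavityRadiusPoly]
    field_simp
    ring
  rw [this]
  exact div_neg_of_neg_of_pos (by linarith) (by linarith)

lemma one_add_logDerivBound_lt {A a r : ℝ} (hA : -3 < A) (ha : 0 ≤ a) (hr0 : 0 ≤ r) (hr1 : r < 1)
    (hφ : 0 < concavityRadiusPoly A a r) :
    1 + logDerivBound a r < (A + 1) / 2 * ((1 - r) / (1 + r)) := by
  have hr2 : 0 < 1 - r ^ 2 := by nlinarith
  have hq : 0 < 1 + 2 * a * r + r ^ 2 := by positivity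
  have hA3 : A + 3 ≠ 0 := by linarith
  have key : (A + 1) / 2 * ((1 - r) / (1 + r)) - (1 + logDerivBound a r) =
      (A + 3) * concavityRadiusPoly A a r / (2 * (1 - r ^ 2) * (1 + 2 * a * r + r ^ 2)) := by
    rw [logDerivBound, concavityRadiusPoly]
    field_simp
    ring
  have := div_pos (mul_pos (by linarith : 0 < A + 3) hφ) (mul_pos (mul_pos two_pos hr2) hq)
  linarith

/-- Lower bound for the radius of concavity of the class `P'(a)` (functions in `P'`
with fixed second coefficient `a = f''(0)/2`). -/
theorem radius_of_concavity_Pprime_fixed_second_coefficient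
    (A : ℝ) (hA : A ∈ Set.Ioc (1 : ℝ) 2) (a : ℝ) (ha : a ∈ Set.Icc (0 : ℝ) 1)
    (φ : ℝ → ℝ)
    (hφ : ∀ r : ℝ, φ r =
      r ^ 4 - (2 * (A + 1) * (1 - a) / (A + 3)) * r ^ 3 +
        (2 * (A * (1 - 2 * a) - 2 * a - 3) / (A + 3)) * r ^ 2 -
        (2 * (A * (1 - a) + 3 * a + 1) / (A + 3)) * r + (A - 1) / (A + 3)) :
    0 < φ 0 ∧ φ 1 < 0 ∧
    ∃ R : ℝ, IsLeast {r : ℝ | r ∈ Set.Ioo (0 : ℝ) 1 ∧ φ r = 0} R ∧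
      ∀ f : ℂ → ℂ, AnalyticOn ℂ f (ball (0 : ℂ) 1) →
        f 0 = 0 → deriv f 0 = 1 → deriv (deriv f) 0 / 2 = (a : ℂ) →
        (∀ z ∈ ball (0 : ℂ) 1, 0 < (deriv f z).re) →
        ∀ z : ℂ, ‖z‖ < R → 0 < (Tfun A f z).re := by
  obtain ⟨hA1, -⟩ := hA
  obtain ⟨ha0, -⟩ := ha
  obtain rfl : φ = concavityRadiusPoly A a := funext hφ
  have hφ0 := concavityRadiusPoly_zero_pos a hA1
  have hφ1 := concavityRadiusPoly_one_neg (A := A) (a := a) (by linarith) (by linarith)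
  obtain ⟨R, hR, hpos⟩ := exists_isLeast_zero_of_pos_of_neg zero_le_one
    (continuous_concavityRadiusPoly A a).continuousOn hφ0 hφ1
  refine ⟨hφ0, hφ1, R, hR, fun f hf _ hf1 hf2 hre z hzR => ?_⟩
  have hz1 : ‖z‖ < 1 := hzR.trans hR.1.1.2
  have hp : DifferentiableOn ℂ (deriv f) (ball 0 1) :=
    (isOpen_ball.analyticOn_iff_analyticOnNhd.mp hf).deriv.differentiableOn
  refine re_Tfun_pos hA1 hz1 ?_
  calc 1 + ‖z * deriv (deriv f) z / deriv f z‖ ≤ 1 + logDerivBound a ‖z‖ := by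
        gcongr
        exact norm_mul_deriv_div_le_logDerivBound hp hre hf1 (by linear_combination 2 * hf2) ha0
          (mem_ball_zero_iff.mpr hz1)
    _ < _ := one_add_logDerivBound_lt (by linarith) ha0 (norm_nonneg z) hz1
        (hpos _ ⟨norm_nonneg z, hzR⟩)
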